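/- With the notation C_{p,q} := ∑_{a,b=1}^N x_a^p y_b^q · Y(x_a)X(y_b) / ((x_a−y_b) X'(x_a) Y'(y_b)), one has C_{-2,1} = −1 + (∏_i y_i/x_i)·( 1 − (∑_i (1/x_i − 1/y_i))·(∑_i (x_i − y_i)) ). -/

import Mathlib

/-!
For `F = ∏ (w - f_i)` and `T = ∏ (w - t_i)`, `nodeResidue t f a = F(t_a) / T'(t_a)` is the residue
of `F / T` at its simple pole `t_a`. Since `F - T` has degree `< N`, Lagrange interpolation at the
nodes `t` gives `∑_a R_a / (z - t_a) = F(z) / T(z) - 1` and `∑_a R_a = ∑ (t_i - f_i)` (the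
coefficient of `w^(N-1)`). Applying the second identity to the inverted nodes `1 / t_i` yields
`∑_a R_a / t_a² = -(∏ f / ∏ t) ∑ (1 / t_i - 1 / f_i)`.

In `C_{-2,1}` the inner sum over `b` is `∑_b y_b R(y, x)_b / (x_a - y_b)`; writing
`y_b = x_a - (x_a - y_b)` and using `X(x_a) = 0` it equals `∑ (x_i - y_i) - x_a`. The outer sum is
then a combination of `∑_a R(x, y)_a / x_a²` and `∑_a R(x, y)_a / x_a`, the latter being the first
identity at `z = 0`.
-/

open Finset

/-- `C_{p,q} = ∑_{a,b} x_a^p y_b^q · Y(x_a) X(y_b) / ((x_a−y_b) X'(x_a) Y'(y_b))`. -/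
noncomputable def Cpq {N : ℕ} (x y : Fin N → ℂ) (p q : ℤ) : ℂ :=
  ∑ a, ∑ b, x a ^ p * y b ^ q *
    (∏ i, (x a - y i)) * (∏ i, (y b - x i)) /
    ((x a - y b) * (∏ i ∈ Finset.univ.erase a, (x a - x i)) *
      (∏ i ∈ Finset.univ.erase b, (y b - y i)))

open Polynomial Lagrange

lemma degree_nodal_sub_nodal_lt {R ι : Type*} [CommRing R] [Nontrivial R] (s : Finset ι)
    (f t : ι → R) : (nodal s f - nodal s t).degree < #s := by
  have h := degree_sub_lt_left (p := nodal s f) (q := nodal s t)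
    (by rw [degree_nodal, degree_nodal]) nodal_ne_zero
    (by rw [nodal_monic.leadingCoeff, nodal_monic.leadingCoeff])
  rwa [degree_nodal] at h

lemma eval_nodal_sub_nodal_node {R ι : Type*} [CommRing R] {s : Finset ι} (f t : ι → R) {a : ι}
    (ha : a ∈ s) : (nodal s f - nodal s t).eval (t a) = ∏ i ∈ s, (t a - f i) := by
  rw [eval_sub, eval_nodal_at_node ha, sub_zero, eval_nodal]

section Residues

variable {K ι : Type*} [Field K] [Fintype ι] [DecidableEq ι] {t : ι → K}

noncomputable def nodeResidue (t f : ι → K) (a : ι) : K :=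
  (∏ i, (t a - f i)) / ∏ i ∈ univ.erase a, (t a - t i)

lemma nodeResidue_inv (f : ι → K) (ht0 : ∀ i, t i ≠ 0) (hf0 : ∀ i, f i ≠ 0) (a : ι) :
    nodeResidue (fun i => (t i)⁻¹) (fun i => (f i)⁻¹) a
      = -((∏ i, t i) / ∏ i, f i) * (nodeResidue t f a / t a ^ 2) := by
  have ha := ht0 a
  set φ : K → K := fun w => -(t a)⁻¹ * w⁻¹
  have hsub : ∀ w, w ≠ 0 → (t a)⁻¹ - w⁻¹ = (t a - w) * φ w := fun w hw => by
    simp only [φ]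
    field_simp
    ring
  have hratio : (∏ i, t i) / ∏ i, f i = (∏ i, φ (f i)) / ∏ i, φ (t i) := by
    rw [← prod_div_distrib, ← prod_div_distrib]
    refine prod_congr rfl fun i _ => ?_
    simp only [φ]
    field_simp [ht0 i, hf0 i]
  have hφt : ∏ i ∈ univ.erase a, φ (t i) ≠ 0 :=
    prod_ne_zero_iff.mpr fun i _ => by simp [φ, ha, ht0 i]
  simp only [nodeResidue, hsub _ (ht0 _), hsub _ (hf0 _), prod_mul_distrib]
  -- `∏ i, φ (t i)` is the product over `univ.erase a` times `φ (t a) = -(t a)⁻²`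
  rw [hratio, ← mul_prod_erase univ (fun i => φ (t i)) (mem_univ a)]
  simp only [φ]
  field_simp

variable (ht : Function.Injective t) (f : ι → K)
include ht

lemma sum_nodeResidue_div_sub {z : K} (hz : ∀ i, z ≠ t i) :
    ∑ a, nodeResidue t f a / (z - t a) = (∏ i, (z - f i)) / (∏ i, (z - t i)) - 1 := by
  have hT : ∏ i, (z - t i) ≠ 0 := prod_ne_zero_iff.mpr fun i _ => sub_ne_zero_of_ne (hz i)
  have key := eval_interpolate_not_at_node (s := univ) (v := t)
    (fun i => (nodal univ f - nodal univ t).eval (t i)) (x := z) fun i _ => hz i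
  rw [← eq_interpolate ht.injOn (degree_nodal_sub_nodal_lt univ f t)] at key
  simp only [eval_nodal_sub_nodal_node _ _ (mem_univ _)] at key
  rw [eval_sub, eval_nodal, eval_nodal] at key
  rw [div_sub_one hT, eq_div_iff hT, key, mul_comm]
  congr 1
  refine sum_congr rfl fun a _ => ?_
  rw [nodeResidue, nodalWeight, prod_inv_distrib]
  ring

lemma sum_nodeResidue : ∑ a, nodeResidue t f a = ∑ i, (t i - f i) := by
  cases isEmpty_or_nonempty ι
  · simp
  have key := coeff_eq_sum (s := univ) ht.injOn (degree_nodal_sub_nodal_lt univ f t)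
  have hcard : 0 < #(univ : Finset ι) := card_pos.mpr univ_nonempty
  simp only [eval_nodal_sub_nodal_node _ _ (mem_univ _)] at key
  simp only [coeff_sub, nodal, prod_X_sub_C_coeff_card_pred _ _ hcard] at key
  simp only [nodeResidue, ← key, sum_sub_distrib]
  ring

lemma sum_nodeResidue_div (ht0 : ∀ i, t i ≠ 0) :
    ∑ a, nodeResidue t f a / t a = 1 - (∏ i, f i) / ∏ i, t i := by
  have h := sum_nodeResidue_div_sub ht f (z := 0) fun i => (ht0 i).symm
  simp only [zero_sub, div_neg, sum_neg_distrib, prod_neg, card_univ] at h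
  rw [mul_div_mul_left _ _ (pow_ne_zero _ (neg_ne_zero.mpr one_ne_zero))] at h
  linear_combination -h

lemma sum_nodeResidue_div_sq (ht0 : ∀ i, t i ≠ 0) (hf0 : ∀ i, f i ≠ 0) :
    ∑ a, nodeResidue t f a / t a ^ 2 = -((∏ i, f i) / ∏ i, t i) * ∑ i, ((t i)⁻¹ - (f i)⁻¹) := by
  have h := sum_nodeResidue (fun i j hij => ht (inv_injective hij)) fun i => (f i)⁻¹
  simp only [nodeResidue_inv f ht0 hf0, ← mul_sum] at h
  have hPt : ∏ i, t i ≠ 0 := prod_ne_zero_iff.mpr fun i _ => ht0 i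
  have hPf : ∏ i, f i ≠ 0 := prod_ne_zero_iff.mpr fun i _ => hf0 i
  rw [← h]
  field_simp

lemma sum_mul_nodeResidue_div_sub {z : K} (hz : ∀ i, z ≠ t i) :
    ∑ a, t a * nodeResidue t f a / (z - t a)
      = z * ((∏ i, (z - f i)) / (∏ i, (z - t i)) - 1) - ∑ i, (t i - f i) := by
  have hsplit : ∀ a, t a * nodeResidue t f a / (z - t a)
      = z * (nodeResidue t f a / (z - t a)) - nodeResidue t f a := fun a => by
    field_simp [sub_ne_zero_of_ne (hz a)]
    ring
  simp only [hsplit, sum_sub_distrib, ← mul_sum, sum_nodeResidue_div_sub ht f hz,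
    sum_nodeResidue ht f]

end Residues

lemma Cpq_neg_two_one_eq_sum {N : ℕ} (x y : Fin N → ℂ) :
    Cpq x y (-2) 1
      = ∑ a, nodeResidue x y a / x a ^ 2 * ∑ b, y b * nodeResidue y x b / (x a - y b) := by
  simp only [Cpq, nodeResidue, mul_sum]
  refine sum_congr rfl fun a _ => sum_congr rfl fun b _ => ?_
  simp only [zpow_neg, zpow_one, zpow_two]
  generalize x a - y b = d
  ring

theorem stmt6 (N : ℕ) (x y : Fin N → ℂ)
    (hxinj : Function.Injective x) (hyinj : Function.Injective y)
    (hx : ∀ i, x i ≠ 0) (hy : ∀ j, y j ≠ 0)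
    (hxy : ∀ i j, x i ≠ y j) :
    Cpq x y (-2) 1 = -1 + (∏ i, y i / x i) *
      (1 - (∑ i, (1 / x i - 1 / y i)) * ∑ i, (x i - y i)) := by
  have inner : ∀ a, ∑ b, y b * nodeResidue y x b / (x a - y b) = ∑ i, (x i - y i) - x a := by
    intro a
    rw [sum_mul_nodeResidue_div_sub hyinj x (hxy a), prod_eq_zero (mem_univ a) (sub_self _)]
    simp only [zero_div, zero_sub, sum_sub_distrib]
    ring
  calc Cpq x y (-2) 1
      = (∑ i, (x i - y i)) * ∑ a, nodeResidue x y a / x a ^ 2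
          - ∑ a, nodeResidue x y a / x a := by
        simp only [Cpq_neg_two_one_eq_sum, inner, mul_sum, ← sum_sub_distrib]
        refine sum_congr rfl fun a _ => ?_
        field_simp [hx a]
    _ = _ := by
        rw [sum_nodeResidue_div_sq hxinj y hx hy, sum_nodeResidue_div hxinj y hx, prod_div_distrib]
        simp only [one_div, sum_sub_distrib]
        ring
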